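/- Suppose the symmetric 3-tensor T satisfies condition (Γ). Let S² be the p×p matrix with entries (S²)_{i,i'} = 2⟨T_i, T_{i'}⟩. Then S² ≤ 2τ² tr(Γ⁴) Γ² in the sense of quadratic forms, i.e. uᵀ S² u ≤ 2τ² tr(Γ⁴) ‖Γu‖² for all u ∈ ℝ^p. -/

import Mathlib

/-!
For fixed `u`, the matrix `M = T(u, ·, ·)` is symmetric and `uᵀ S² u = 2 ‖M‖_F² = 2 ∑ λₐ²`, where
`λₐ = T(u, vₐ, vₐ)` along an orthonormal eigenbasis `(vₐ)` of `M`. The heart of the proof is the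
Banach-type polarization bound `T(u, v, v)² ≤ τ² ‖Γu‖² ‖Γv‖⁴`, obtained by restricting the cubic
`w ↦ T(w, w, w)` to the plane spanned by `u` and `v`; there it becomes a bound on the coefficients
of a binary cubic form that is controlled on an ellipse, which after a linear change of variables
is the van der Corput–Schaake inequality `f² + (f'/3)² ≤ ‖f‖∞²` for a cubic form on the unit
circle, proved by a three-point quadrature with nonnegative weights. Finally
`‖Γvₐ‖⁴ = (vₐᵀ Γ² vₐ)² ≤ ‖Γ² vₐ‖²` by Cauchy–Schwarz, and summing over the orthonormal basis gives
`∑ₐ ‖Γ² vₐ‖² = ‖Γ²‖_F² = tr Γ⁴`.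
-/

open Matrix Finset

noncomputable def euclNorm {p : ℕ} (v : Fin p → ℝ) : ℝ := Real.sqrt (∑ i, v i ^ 2)

open Real Filter Topology

noncomputable def binaryCubic (a b c d s t : ℝ) : ℝ :=
  a * s ^ 3 + 3 * b * s ^ 2 * t + 3 * c * s * t ^ 2 + d * t ^ 3

lemma sq_add_sq_le_of_forall_mul_cos_add_mul_sin_le {x y M : ℝ}
    (h : ∀ ψ, x * cos ψ + y * sin ψ ≤ M) : x ^ 2 + y ^ 2 ≤ M ^ 2 := by
  set z : ℂ := ⟨x, y⟩
  have hz : x * cos z.arg + y * sin z.arg = ‖z‖ := by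
    have hx : ‖z‖ * cos z.arg = x := Complex.norm_mul_cos_arg z
    have hy : ‖z‖ * sin z.arg = y := Complex.norm_mul_sin_arg z
    rw [← hx, ← hy]
    linear_combination ‖z‖ * cos_sq_add_sin_sq z.arg
  have hnorm : ‖z‖ ^ 2 = x ^ 2 + y ^ 2 := by
    rw [Complex.sq_norm, Complex.normSq_mk]; ring
  rw [← hnorm]
  exact pow_le_pow_left₀ (norm_nonneg z) (hz ▸ h z.arg) 2

lemma cos_two_pi_div_three : cos (2 * π / 3) = -1 / 2 := by
  rw [show 2 * π / 3 = π - π / 3 by ring, cos_pi_sub, cos_pi_div_three]; norm_num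

lemma sin_two_pi_div_three : sin (2 * π / 3) = √3 / 2 := by
  rw [show 2 * π / 3 = π - π / 3 by ring, sin_pi_sub, sin_pi_div_three]

/-- A quadrature with nonnegative weights for `f ↦ 3 (3 f(0) cos 3φ + f'(0) sin 3φ)`, where
`f θ = binaryCubic a b c d (cos θ) (sin θ)`; its nodes are the maxima of the extremal function
`cos (3θ - 3φ)`. -/
lemma binaryCubic_interpolation (a b c d φ : ℝ) :
    (1 + 2 * cos (2 * φ)) ^ 2 * binaryCubic a b c d (cos φ) (sin φ)
      + (1 + 2 * cos (2 * (φ + 2 * π / 3))) ^ 2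
        * binaryCubic a b c d (cos (φ + 2 * π / 3)) (sin (φ + 2 * π / 3))
      + (1 + 2 * cos (2 * (φ - 2 * π / 3))) ^ 2
        * binaryCubic a b c d (cos (φ - 2 * π / 3)) (sin (φ - 2 * π / 3))
      = 9 * (a * cos (3 * φ) + b * sin (3 * φ)) := by
  have hr : √3 ^ 2 = 3 := sq_sqrt (by norm_num)
  have hφ := cos_sq_add_sin_sq φ
  simp only [binaryCubic, cos_add, sin_add, cos_sub, sin_sub, cos_two_mul, cos_three_mul,
    sin_three_mul, cos_two_pi_div_three, sin_two_pi_div_three]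
  grind

lemma interpolation_weights_sum (φ : ℝ) :
    (1 + 2 * cos (2 * φ)) ^ 2 + (1 + 2 * cos (2 * (φ + 2 * π / 3))) ^ 2
      + (1 + 2 * cos (2 * (φ - 2 * π / 3))) ^ 2 = 9 := by
  have hr : √3 ^ 2 = 3 := sq_sqrt (by norm_num)
  have hφ := cos_sq_add_sin_sq φ
  simp only [cos_add, cos_sub, cos_two_mul, cos_two_pi_div_three, sin_two_pi_div_three]
  grind

lemma binaryCubic_coeff_sq_add_sq_le {a b c d M : ℝ}
    (h : ∀ θ, binaryCubic a b c d (cos θ) (sin θ) ^ 2 ≤ M) : a ^ 2 + b ^ 2 ≤ M := by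
  have hM : 0 ≤ M := (sq_nonneg _).trans (h 0)
  have hbound (θ : ℝ) : binaryCubic a b c d (cos θ) (sin θ) ≤ √M :=
    (abs_le.mp (abs_le_sqrt (h θ))).2
  rw [← sq_sqrt hM]
  refine sq_add_sq_le_of_forall_mul_cos_add_mul_sin_le fun ψ => ?_
  set φ := ψ / 3
  have key := binaryCubic_interpolation a b c d φ
  rw [show 3 * φ = ψ by ring] at key
  have hsum := add_le_add (add_le_add
    (mul_le_mul_of_nonneg_left (hbound φ) (sq_nonneg (1 + 2 * cos (2 * φ))))
    (mul_le_mul_of_nonneg_left (hbound (φ + 2 * π / 3))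
      (sq_nonneg (1 + 2 * cos (2 * (φ + 2 * π / 3))))))
    (mul_le_mul_of_nonneg_left (hbound (φ - 2 * π / 3))
      (sq_nonneg (1 + 2 * cos (2 * (φ - 2 * π / 3)))))
  rw [key] at hsum
  linear_combination hsum / 9 + √M / 9 * interpolation_weights_sum φ

lemma binaryCubic_coeff_sq_le_of_posDef {a b c d A B C τ : ℝ} (hA : 0 < A)
    (hD : 0 < A * B - C ^ 2)
    (h : ∀ s t,
      binaryCubic a b c d s t ^ 2 ≤ τ ^ 2 * (A * s ^ 2 + 2 * C * s * t + B * t ^ 2) ^ 3) :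
    b ^ 2 ≤ τ ^ 2 * A ^ 2 * B := by
  set D := A * B - C ^ 2
  set r := √D
  have hr : r ^ 2 = D := sq_sqrt hD.le
  -- `(s, t) = (r cos θ - C sin θ, A sin θ)` maps the unit circle onto the ellipse `q(s, t) = A D`
  have hcircle : (a * r ^ 3) ^ 2 + (r ^ 2 * (b * A - a * C)) ^ 2 ≤ τ ^ 2 * (A * D) ^ 3 :=
    binaryCubic_coeff_sq_add_sq_le (c := r * (a * C ^ 2 - 2 * b * A * C + c * A ^ 2))
      (d := d * A ^ 3 - 3 * c * A ^ 2 * C + 3 * b * A * C ^ 2 - a * C ^ 3) fun θ => by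
      have hq : A * (r * cos θ - C * sin θ) ^ 2 + 2 * C * (r * cos θ - C * sin θ) * (A * sin θ)
          + B * (A * sin θ) ^ 2 = A * D := by
        linear_combination A * cos θ ^ 2 * hr + A * D * cos_sq_add_sin_sq θ
      have := h (r * cos θ - C * sin θ) (A * sin θ)
      rw [hq] at this
      convert this using 2
      simp only [binaryCubic]; ring
  have key : D * a ^ 2 + (b * A - a * C) ^ 2 ≤ τ ^ 2 * A ^ 3 * D := by
    refine le_of_mul_le_mul_left ?_ (pow_pos hD 2)
    linear_combination hcircle
      - (a ^ 2 * (r ^ 4 + r ^ 2 * D + D ^ 2) + (r ^ 2 + D) * (b * A - a * C) ^ 2) * hr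
  have hAB : 0 ≤ A * B := by nlinarith [sq_nonneg C]
  -- Cauchy–Schwarz for `b A = (b A - a C) + a C`, using `D + C² = A B`
  have hcs : D * (b * A) ^ 2 ≤ (D * a ^ 2 + (b * A - a * C) ^ 2) * (A * B) := by
    nlinarith [sq_nonneg ((b * A - a * C) * C - D * a)]
  refine le_of_mul_le_mul_left ?_ (by positivity : 0 < D * A ^ 2)
  nlinarith [mul_le_mul_of_nonneg_right key hAB]

lemma binaryCubic_coeff_sq_le {a b c d A B C τ : ℝ}
    (hq : ∀ s t, 0 ≤ A * s ^ 2 + 2 * C * s * t + B * t ^ 2)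
    (h : ∀ s t,
      binaryCubic a b c d s t ^ 2 ≤ τ ^ 2 * (A * s ^ 2 + 2 * C * s * t + B * t ^ 2) ^ 3) :
    b ^ 2 ≤ τ ^ 2 * A ^ 2 * B := by
  have hA : 0 ≤ A := by simpa using hq 1 0
  have hB : 0 ≤ B := by simpa using hq 0 1
  have hC : C ^ 2 ≤ A * B := by
    have := discrim_le_zero (a := A) (b := 2 * C) (c := B) fun x => (hq x 1).trans_eq (by ring)
    rw [discrim] at this
    linarith
  -- `q + ε (s² + t²)` is positive definite and dominates `q`
  have hε (ε : ℝ) (hε : 0 < ε) : b ^ 2 ≤ τ ^ 2 * (A + ε) ^ 2 * (B + ε) :=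
    binaryCubic_coeff_sq_le_of_posDef (C := C) (by linarith) (by nlinarith) fun s t =>
      (h s t).trans <| mul_le_mul_of_nonneg_left
        (pow_le_pow_left₀ (hq s t) (by nlinarith [sq_nonneg s, sq_nonneg t]) 3) (sq_nonneg τ)
  have hlim : Tendsto (fun ε => τ ^ 2 * (A + ε) ^ 2 * (B + ε)) (𝓝[>] 0)
      (𝓝 (τ ^ 2 * A ^ 2 * B)) := by
    have hcont : Continuous fun ε : ℝ => τ ^ 2 * (A + ε) ^ 2 * (B + ε) := by fun_prop
    simpa using (hcont.tendsto 0).mono_left nhdsWithin_le_nhds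
  exact ge_of_tendsto hlim (eventually_nhdsWithin_of_forall hε)

section Trilinear

variable {m n : Type*} [Fintype m] [Fintype n]

def trilin (T : n → n → n → ℝ) (x y z : n → ℝ) : ℝ :=
  ∑ i, ∑ j, ∑ k, T i j k * x i * y j * z k

lemma trilin_comm12 {T : n → n → n → ℝ} (hT : ∀ i j k, T i j k = T j i k) (x y z : n → ℝ) :
    trilin T x y z = trilin T y x z := by
  rw [trilin, sum_comm]
  simp only [hT _ _ _, trilin, mul_right_comm _ (x _)]

lemma trilin_comm23 {T : n → n → n → ℝ} (hT : ∀ i j k, T i j k = T i k j) (x y z : n → ℝ) :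
    trilin T x y z = trilin T x z y := by
  refine sum_congr rfl fun i _ => ?_
  rw [sum_comm]
  simp only [hT i _ _, mul_right_comm _ (y _)]

lemma trilin_add_smul_left (T : n → n → n → ℝ) (s t : ℝ) (x x' y z : n → ℝ) :
    trilin T (s • x + t • x') y z = s * trilin T x y z + t * trilin T x' y z := by
  simp only [trilin, mul_sum, ← sum_add_distrib, Pi.add_apply, Pi.smul_apply, smul_eq_mul]
  congr! 3; ring

lemma trilin_add_smul_mid (T : n → n → n → ℝ) (s t : ℝ) (x y y' z : n → ℝ) :
    trilin T x (s • y + t • y') z = s * trilin T x y z + t * trilin T x y' z := by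
  simp only [trilin, mul_sum, ← sum_add_distrib, Pi.add_apply, Pi.smul_apply, smul_eq_mul]
  congr! 3; ring

lemma trilin_add_smul_right (T : n → n → n → ℝ) (s t : ℝ) (x y z z' : n → ℝ) :
    trilin T x y (s • z + t • z') = s * trilin T x y z + t * trilin T x y z' := by
  simp only [trilin, mul_sum, ← sum_add_distrib, Pi.add_apply, Pi.smul_apply, smul_eq_mul]
  congr! 3; ring

lemma trilin_add_smul_self {T : n → n → n → ℝ}
    (hsym : ∀ i j k, T i j k = T j i k ∧ T i j k = T i k j) (s t : ℝ) (u v : n → ℝ) :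
    trilin T (s • v + t • u) (s • v + t • u) (s • v + t • u)
      = binaryCubic (trilin T v v v) (trilin T u v v) (trilin T u u v) (trilin T u u u) s t := by
  have h12 (x y z : n → ℝ) := trilin_comm12 (fun i j k => (hsym i j k).1) x y z
  have h23 (x y z : n → ℝ) := trilin_comm23 (fun i j k => (hsym i j k).2) x y z
  simp only [trilin_add_smul_left, trilin_add_smul_mid, trilin_add_smul_right]
  rw [h12 v u v, h23 v v u, h12 v u v, h23 u v u, h12 v u u, h23 u v u, binaryCubic]
  ring

lemma mulVec_add_smul_dotProduct_self (Γ : Matrix m n ℝ) (s t : ℝ) (u v : n → ℝ) :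
    Γ *ᵥ (s • v + t • u) ⬝ᵥ Γ *ᵥ (s • v + t • u)
      = (Γ *ᵥ v ⬝ᵥ Γ *ᵥ v) * s ^ 2 + 2 * (Γ *ᵥ v ⬝ᵥ Γ *ᵥ u) * s * t
        + (Γ *ᵥ u ⬝ᵥ Γ *ᵥ u) * t ^ 2 := by
  simp only [mulVec_add, mulVec_smul, add_dotProduct, dotProduct_add, smul_dotProduct,
    dotProduct_smul, smul_eq_mul, dotProduct_comm (Γ *ᵥ u) (Γ *ᵥ v)]
  ring

lemma trilin_sq_le {T : n → n → n → ℝ} (hsym : ∀ i j k, T i j k = T j i k ∧ T i j k = T i k j)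
    {Γ : Matrix m n ℝ} {τ : ℝ} (hT : ∀ w, trilin T w w w ^ 2 ≤ τ ^ 2 * (Γ *ᵥ w ⬝ᵥ Γ *ᵥ w) ^ 3)
    (u v : n → ℝ) :
    trilin T u v v ^ 2 ≤ τ ^ 2 * (Γ *ᵥ v ⬝ᵥ Γ *ᵥ v) ^ 2 * (Γ *ᵥ u ⬝ᵥ Γ *ᵥ u) := by
  refine binaryCubic_coeff_sq_le (a := trilin T v v v) (c := trilin T u u v)
    (d := trilin T u u u) (C := Γ *ᵥ v ⬝ᵥ Γ *ᵥ u) (fun s t => ?_) (fun s t => ?_)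
  · rw [← mulVec_add_smul_dotProduct_self]
    simpa using dotProduct_self_star_nonneg (Γ *ᵥ (s • v + t • u))
  · rw [← mulVec_add_smul_dotProduct_self, ← trilin_add_smul_self hsym]
    exact hT _

def contractFirst (T : n → n → n → ℝ) (x : n → ℝ) : Matrix n n ℝ :=
  of fun j k => ∑ i, x i * T i j k

lemma dotProduct_contractFirst_mulVec (T : n → n → n → ℝ) (x y z : n → ℝ) :
    y ⬝ᵥ contractFirst T x *ᵥ z = trilin T x y z := by
  simp only [trilin, contractFirst, dotProduct, mulVec, of_apply, mul_sum, sum_mul]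
  conv_rhs => rw [sum_comm]
  refine sum_congr rfl fun j _ => ?_
  conv_rhs => rw [sum_comm]
  exact sum_congr rfl fun k _ => sum_congr rfl fun i _ => by ring

lemma isHermitian_contractFirst {T : n → n → n → ℝ} (hT : ∀ i j k, T i j k = T i k j)
    (x : n → ℝ) : (contractFirst T x).IsHermitian := by
  rw [isHermitian_iff_isSymm]
  exact IsSymm.ext fun j k => by simp only [contractFirst, of_apply, hT _ j k]

lemma dotProduct_gram_mulVec (T : n → n → n → ℝ) (u : n → ℝ) :
    u ⬝ᵥ (of fun i i' => 2 * ((of fun j k => T i j k)ᵀ * of fun j k => T i' j k).trace) *ᵥ u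
      = 2 * ∑ j, ∑ k, contractFirst T u j k ^ 2 := by
  calc _ = ∑ i, ∑ i', ∑ k, ∑ j, 2 * (u i * T i j k) * (u i' * T i' j k) := by
        simp only [dotProduct, mulVec, trace, Matrix.diag, mul_apply, transpose_apply, of_apply,
          mul_sum, sum_mul]
        exact sum_congr rfl fun i _ => sum_congr rfl fun i' _ => sum_congr rfl fun k _ =>
          sum_congr rfl fun j _ => by ring
    _ = ∑ k, ∑ j, ∑ i, ∑ i', 2 * (u i * T i j k) * (u i' * T i' j k) :=
        (sum_congr rfl fun i _ => sum_comm.trans (sum_congr rfl fun k _ => sum_comm)).trans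
          (sum_comm.trans (sum_congr rfl fun k _ => sum_comm))
    _ = 2 * ∑ j, ∑ k, contractFirst T u j k ^ 2 := by
        rw [sum_comm]
        simp only [contractFirst, of_apply, sq, sum_mul_sum]
        simp only [mul_sum, mul_assoc]

end Trilinear

section Orthonormal

variable {m n ι : Type*} [Fintype m] [Fintype n] [Fintype ι]

lemma sum_mulVec_orthonormalBasis_dotProduct_self (X : Matrix m n ℝ)
    (b : OrthonormalBasis ι ℝ (EuclideanSpace ℝ n)) :
    ∑ a, X *ᵥ b a ⬝ᵥ X *ᵥ b a = ∑ j, ∑ k, X j k ^ 2 := by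
  have hrow (a : ι) (j : m) : (X *ᵥ b a) j = inner ℝ (b a) (WithLp.toLp 2 (X j)) := by
    rw [EuclideanSpace.inner_eq_star_dotProduct, star_trivial]; rfl
  calc ∑ a, X *ᵥ b a ⬝ᵥ X *ᵥ b a = ∑ j, ∑ a, inner ℝ (b a) (WithLp.toLp 2 (X j)) ^ 2 := by
        simp only [dotProduct, hrow, ← sq]; exact sum_comm
    _ = ∑ j, ∑ k, X j k ^ 2 := by
        simp only [b.sum_sq_inner_right, EuclideanSpace.real_norm_sq_eq]

lemma dotProduct_self_orthonormalBasis (b : OrthonormalBasis ι ℝ (EuclideanSpace ℝ n)) (a : ι) :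
    ⇑(b a) ⬝ᵥ ⇑(b a) = 1 := by
  have := b.inner_eq_one a
  rwa [EuclideanSpace.inner_eq_star_dotProduct, star_trivial] at this

lemma mulVec_dotProduct_mulVec_of_mulVec_eq_smul {M : Matrix n n ℝ} {v : n → ℝ} {μ : ℝ}
    (hv : v ⬝ᵥ v = 1) (hμ : M *ᵥ v = μ • v) : M *ᵥ v ⬝ᵥ M *ᵥ v = (v ⬝ᵥ M *ᵥ v) ^ 2 := by
  simp only [hμ, smul_dotProduct, dotProduct_smul, hv, smul_eq_mul]; ring

lemma dotProduct_sq_le (v w : n → ℝ) : (v ⬝ᵥ w) ^ 2 ≤ (v ⬝ᵥ v) * (w ⬝ᵥ w) := by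
  simpa only [dotProduct, sq] using sum_mul_sq_le_sq_mul_sq univ v w

lemma mulVec_dotProduct_mulVec_sq_le [DecidableEq n] {Γ : Matrix n n ℝ} (hΓ : Γ.IsSymm)
    {v : n → ℝ} (hv : v ⬝ᵥ v = 1) : (Γ *ᵥ v ⬝ᵥ Γ *ᵥ v) ^ 2 ≤ Γ ^ 2 *ᵥ v ⬝ᵥ Γ ^ 2 *ᵥ v := by
  have : Γ *ᵥ v ⬝ᵥ Γ *ᵥ v = v ⬝ᵥ Γ ^ 2 *ᵥ v := by
    rw [sq, ← mulVec_mulVec, dotProduct_mulVec, ← mulVec_transpose, hΓ.eq, dotProduct_comm]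
  simpa [this, hv] using dotProduct_sq_le v (Γ ^ 2 *ᵥ v)

lemma sum_sq_eq_trace_transpose_mul_self (X : Matrix m n ℝ) :
    ∑ j, ∑ k, X j k ^ 2 = (Xᵀ * X).trace := by
  simp only [trace, Matrix.diag, mul_apply, transpose_apply, sq]
  exact sum_comm

end Orthonormal

lemma contractFirst_mulVec_dotProduct_self_le {n : Type*} [Fintype n] [DecidableEq n]
    {T : n → n → n → ℝ} (hsym : ∀ i j k, T i j k = T j i k ∧ T i j k = T i k j)
    {Γ : Matrix n n ℝ} (hΓ : Γ.IsSymm) {τ : ℝ}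
    (hT : ∀ w, trilin T w w w ^ 2 ≤ τ ^ 2 * (Γ *ᵥ w ⬝ᵥ Γ *ᵥ w) ^ 3) (u : n → ℝ) {v : n → ℝ}
    {μ : ℝ} (hv : v ⬝ᵥ v = 1) (hμ : contractFirst T u *ᵥ v = μ • v) :
    contractFirst T u *ᵥ v ⬝ᵥ contractFirst T u *ᵥ v
      ≤ τ ^ 2 * (Γ *ᵥ u ⬝ᵥ Γ *ᵥ u) * (Γ ^ 2 *ᵥ v ⬝ᵥ Γ ^ 2 *ᵥ v) := by
  rw [mulVec_dotProduct_mulVec_of_mulVec_eq_smul hv hμ, dotProduct_contractFirst_mulVec]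
  refine (trilin_sq_le hsym hT u v).trans ?_
  rw [mul_right_comm]
  have hu : 0 ≤ Γ *ᵥ u ⬝ᵥ Γ *ᵥ u := by simpa using dotProduct_self_star_nonneg (Γ *ᵥ u)
  gcongr
  exact mulVec_dotProduct_mulVec_sq_le hΓ hv

lemma euclNorm_sq {p : ℕ} (v : Fin p → ℝ) : euclNorm v ^ 2 = v ⬝ᵥ v := by
  rw [euclNorm, sq_sqrt (sum_nonneg fun i _ => sq_nonneg _)]
  simp only [dotProduct, sq]

theorem S_sq_quadratic_form_bound_general
    (p : ℕ) (T : Fin p → Fin p → Fin p → ℝ)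
    (hsym : ∀ i j k, T i j k = T j i k ∧ T i j k = T i k j)
    (Γ : Matrix (Fin p) (Fin p) ℝ) (hΓ : Γ.IsSymm) (τ : ℝ)
    (hT : ∀ u : Fin p → ℝ,
      |∑ i, ∑ j, ∑ k, T i j k * u i * u j * u k| ≤ τ * euclNorm (Γ.mulVec u) ^ 3) :
    ∀ u : Fin p → ℝ,
      u ⬝ᵥ ((Matrix.of fun i i' : Fin p =>
          2 * ((Matrix.of fun j k : Fin p => T i j k)ᵀ
                * Matrix.of fun j k : Fin p => T i' j k).trace).mulVec u)
        ≤ 2 * τ ^ 2 * (Γ ^ 4).trace * euclNorm (Γ.mulVec u) ^ 2 := by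
  intro u
  have hcube (w : Fin p → ℝ) : trilin T w w w ^ 2 ≤ τ ^ 2 * (Γ *ᵥ w ⬝ᵥ Γ *ᵥ w) ^ 3 := by
    calc trilin T w w w ^ 2 = |trilin T w w w| ^ 2 := (sq_abs _).symm
      _ ≤ (τ * euclNorm (Γ *ᵥ w) ^ 3) ^ 2 := pow_le_pow_left₀ (abs_nonneg _) (hT w) 2
      _ = τ ^ 2 * (Γ *ᵥ w ⬝ᵥ Γ *ᵥ w) ^ 3 := by rw [← euclNorm_sq]; ring
  set M := contractFirst T u
  have hM : M.IsHermitian := isHermitian_contractFirst (fun i j k => (hsym i j k).2) u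
  set b := hM.eigenvectorBasis
  calc _ = 2 * ∑ a, M *ᵥ b a ⬝ᵥ M *ᵥ b a := by
        rw [dotProduct_gram_mulVec, sum_mulVec_orthonormalBasis_dotProduct_self]
    _ ≤ 2 * ∑ a, τ ^ 2 * (Γ *ᵥ u ⬝ᵥ Γ *ᵥ u) * (Γ ^ 2 *ᵥ b a ⬝ᵥ Γ ^ 2 *ᵥ b a) := by
        gcongr with a
        exact contractFirst_mulVec_dotProduct_self_le hsym hΓ hcube u
          (dotProduct_self_orthonormalBasis b a) (hM.mulVec_eigenvectorBasis a)
    _ = 2 * τ ^ 2 * (Γ ^ 4).trace * euclNorm (Γ *ᵥ u) ^ 2 := by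
        rw [← mul_sum, sum_mulVec_orthonormalBasis_dotProduct_self,
          sum_sq_eq_trace_transpose_mul_self, (hΓ.pow 2).eq, ← pow_add, euclNorm_sq]
        ring

/-- If the symmetric 3-tensor `T` satisfies condition (Γ), then the matrix
`S²` with entries `(S²)_{i,i'} = 2⟨T_i, T_{i'}⟩` (Frobenius inner product) satisfies
`uᵀ S² u ≤ 2τ² tr(Γ⁴) ‖Γu‖²` for all `u ∈ ℝ^p`. -/
theorem S_sq_quadratic_form_bound
    (p : ℕ) (T : Fin p → Fin p → Fin p → ℝ)
    (hsym : ∀ i j k, T i j k = T j i k ∧ T i j k = T i k j)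
    (Γ : Matrix (Fin p) (Fin p) ℝ) (hΓ : Γ.IsSymm) (τ : ℝ) (hτ : 0 < τ)
    (hT : ∀ u : Fin p → ℝ,
      |∑ i, ∑ j, ∑ k, T i j k * u i * u j * u k| ≤ τ * euclNorm (Γ.mulVec u) ^ 3) :
    ∀ u : Fin p → ℝ,
      u ⬝ᵥ ((Matrix.of fun i i' : Fin p =>
          2 * ((Matrix.of fun j k : Fin p => T i j k)ᵀ
                * Matrix.of fun j k : Fin p => T i' j k).trace).mulVec u)
        ≤ 2 * τ ^ 2 * (Γ ^ 4).trace * euclNorm (Γ.mulVec u) ^ 2 :=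
  S_sq_quadratic_form_bound_general p T hsym Γ hΓ τ hT
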